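/- arXiv:2307.07284 — 6 statements merged into one kernel-verified Lean document; each statement's English description precedes it below -/
import Mathlib

section
/- Let G be a finite simple graph and H a maximal 2-3-subgraph of G. Let F be any set of vertices of G that contains every branchpoint of H, every linkpoint of H, and at least one vertex of every isolated cycle of H. Then F is a feedback vertex set of G, i.e., the subgraph of G induced on V(G) \ F is acyclic. -/
open SimpleGraph

variable {V : Type*}

/-- The degree of a vertex `v` in a subgraph `H` of a simple graph: the number of
edges of `H` incident to `v`. -/
noncomputable def subDeg {G : SimpleGraph V} (H : G.Subgraph) (v : V) : ℕ :=
  (H.neighborSet v).ncard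

/-- `H` is a 2-3-subgraph of `G`: every vertex of `H` has degree exactly 2 or
exactly 3 in `H`. -/
def Is23Subgraph {G : SimpleGraph V} (H : G.Subgraph) : Prop :=
  ∀ v ∈ H.verts, subDeg H v = 2 ∨ subDeg H v = 3

/-- `H` is a maximal 2-3-subgraph of `G`: it is a 2-3-subgraph and no strictly larger
subgraph of `G` is a 2-3-subgraph. -/
def Maximal23Subgraph {G : SimpleGraph V} (H : G.Subgraph) : Prop :=
  Is23Subgraph H ∧ ∀ H' : G.Subgraph, Is23Subgraph H' → H ≤ H' → H' = H

/-!
Let `C` be a cycle of `G` avoiding `F`. The vertices of `C` in `H` have degree 2 in `H`, since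
branchpoints lie in `F`. If `C` misses `H`, then `H ⊔ C` is a larger 2-3-subgraph; if `C` lies
inside `H`, it is an isolated cycle; if it meets `H` in a single vertex, that vertex is a
linkpoint. Otherwise an arc of `C` joins two distinct vertices of `H` through vertices outside
`H`, and adding this ear to `H` raises its ends to degree 3 while its interior gets degree 2,
again contradicting maximality.
-/

namespace SimpleGraph.Walk

variable {G : SimpleGraph V}

theorem exists_append_forall_getVert_notMem {S : Set V} :
    ∀ {u v : V} (p : G.Walk u v), v ∈ S → ∃ w ∈ S, ∃ (q : G.Walk u w) (r : G.Walk w v),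
      p = q.append r ∧ ∀ j < q.length, q.getVert j ∉ S
  | u, _, .nil, hv => ⟨u, hv, .nil, .nil, rfl, by simp⟩
  | u, _, .cons h p, hv => by
    by_cases hu : u ∈ S
    · exact ⟨u, hu, .nil, .cons h p, rfl, by simp⟩
    obtain ⟨w, hw, q, r, rfl, hq⟩ := exists_append_forall_getVert_notMem p hv
    refine ⟨w, hw, .cons h q, r, rfl, fun j hj => ?_⟩
    cases j with
    | zero => simpa using hu
    | succ j => exact hq j (by simpa using hj)

theorem exists_toSubgraph_adj_mem_notMem {u v : V} (p : G.Walk u v) {S : Set V} {a w : V}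
    (ha : a ∈ p.support) (haS : a ∈ S) (hw : w ∈ p.support) (hwS : w ∉ S) :
    ∃ b y, p.toSubgraph.Adj b y ∧ b ∈ S ∧ y ∉ S := by
  classical
  obtain ⟨d, hd, hbS, hyS⟩ :=
    ((p.takeUntil a ha).reverse.append (p.takeUntil w hw)).exists_boundary_dart S haS hwS
  refine ⟨d.fst, d.snd, ?_, hbS, hyS⟩
  rw [adj_toSubgraph_iff_mem_edges]
  have hd : d.edge ∈ _ := List.mem_map_of_mem (f := Dart.edge) hd
  rw [← edges_eq_map_darts, edges_append, edges_reverse, List.mem_append, List.mem_reverse] at hd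
  exact hd.elim (edges_takeUntil_subset_edges _ _ ·) (edges_takeUntil_subset_edges _ _ ·)

theorem IsCycle.exists_isCycle_snd_eq {u b y : V} {c : G.Walk u u} (hc : c.IsCycle)
    (hadj : c.toSubgraph.Adj b y) :
    ∃ d : G.Walk b b, d.IsCycle ∧ d.snd = y ∧ ∀ x, x ∈ d.support ↔ x ∈ c.support := by
  classical
  have hb : b ∈ c.support := c.mem_verts_toSubgraph.mp hadj.fst_mem
  obtain ⟨d, hd, hdy, hverts⟩ :=
    (hc.rotate hb).exists_isCycle_snd_verts_eq (by rwa [toSubgraph_rotate])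
  refine ⟨d, hd, hdy, fun x => ?_⟩
  rw [← mem_verts_toSubgraph, hverts, toSubgraph_rotate, mem_verts_toSubgraph]

/-- Follow `d` from `b` through `d.snd` until it first returns to `S`. -/
theorem IsCycle.inter_eq_singleton_or_exists_isPath {S : Set V} {b : V} {d : G.Walk b b}
    (hd : d.IsCycle) (hb : b ∈ S) (hy : d.snd ∉ S) :
    {x | x ∈ d.support} ∩ S = {b} ∨ ∃ b' ∈ S, ∃ p : G.Walk b b', p.IsPath ∧ 1 < p.length ∧
      p.support ⊆ d.support ∧ ∀ i, 0 < i → i < p.length → p.getVert i ∉ S := by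
  have hsupp : d.support = b :: d.tail.support := (cons_support_tail hd.not_nil).symm
  obtain ⟨b', hb', q, r, hqr, hq⟩ := d.tail.exists_append_forall_getVert_notMem hb
  have htail : (q.append r).IsPath := hqr ▸ hd.isPath_tail
  have hqS : ∀ x ∈ q.support, x ∈ S → x = b' := by
    intro x hx hxS
    obtain ⟨j, rfl, hj⟩ := mem_support_iff_exists_getVert.mp hx
    rcases hj.lt_or_eq with hj | rfl
    · exact absurd hxS (hq j hj)
    · exact q.getVert_length
  by_cases hbb' : b' = b
  · subst hbb'
    left
    obtain rfl : r = .nil := eq_nil_iff_nil.mpr (isPath_iff_nil.mp htail.of_append_right)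
    rw [append_nil] at hqr
    ext x
    simp only [Set.mem_inter_iff, Set.mem_ofPred_eq, Set.mem_singleton_iff, hsupp, hqr,
      List.mem_cons]
    constructor
    · rintro ⟨hx | hx, hxS⟩
      exacts [hx, hqS x hx hxS]
    · rintro rfl
      exact ⟨Or.inl rfl, hb'⟩
  · right
    have hqlen : 0 < q.length :=
      not_nil_iff_lt_length.mp (not_nil_of_ne fun h => hy (h ▸ hb'))
    refine ⟨b', hb', cons (d.adj_snd hd.not_nil) q,
      (cons_isPath_iff _ _).mpr ⟨htail.of_append_left, fun h => hbb' (hqS b h hb).symm⟩,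
      by simpa using hqlen, ?_, fun i hi0 hil => ?_⟩
    · rw [support_cons, hsupp, hqr]
      exact List.cons_subset_cons _ (support_subset_support_append_left q r)
    · rw [getVert_cons _ _ hi0.ne']
      exact hq (i - 1) (by simp only [length_cons] at hil; omega)

end SimpleGraph.Walk

theorem SimpleGraph.isAcyclic_induce_compl_of_forall_isCycle {G : SimpleGraph V} {F : Set V}
    (h : ∀ (u : V) (c : G.Walk u u), c.IsCycle → ∃ x ∈ c.support, x ∈ F) :
    (G.induce Fᶜ).IsAcyclic := by
  intro u c hc
  obtain ⟨x, hx, hxF⟩ :=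
    h _ _ ((Walk.isCycle_map_iff_of_injective (f := (Embedding.induce Fᶜ).toHom)
      (Embedding.induce (G := G) Fᶜ).injective).mpr hc)
  rw [Walk.support_map, List.mem_map] at hx
  obtain ⟨y, -, rfl⟩ := hx
  exact y.2 hxF

section

variable {G : SimpleGraph V} {H K : G.Subgraph} {v : V}

theorem subDeg_sup_of_notMem_verts_right (hv : v ∉ K.verts) :
    subDeg (H ⊔ K) v = subDeg H v := by
  have hK : K.neighborSet v = ∅ :=
    Set.eq_empty_of_forall_notMem fun _ h => hv (K.edge_vert h)
  rw [subDeg, Subgraph.neighborSet_sup, hK, Set.union_empty, subDeg]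

theorem subDeg_sup_of_notMem_verts_left (hv : v ∉ H.verts) :
    subDeg (H ⊔ K) v = subDeg K v := by
  rw [sup_comm, subDeg_sup_of_notMem_verts_right hv]

theorem subDeg_sup_of_neighborSet_eq_singleton {z : V} (hK : K.neighborSet v = {z})
    (hz : z ∉ H.verts) (hH : subDeg H v ≠ 0) : subDeg (H ⊔ K) v = subDeg H v + 1 := by
  rw [subDeg, Subgraph.neighborSet_sup, hK, Set.union_singleton,
    Set.ncard_insert_of_notMem (fun h => hz (H.neighborSet_subset_verts v h))
      (Set.finite_of_ncard_ne_zero hH), subDeg]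

theorem Is23Subgraph.sup (hH : Is23Subgraph H)
    (hK : ∀ v ∈ K.verts, subDeg (H ⊔ K) v = 2 ∨ subDeg (H ⊔ K) v = 3) :
    Is23Subgraph (H ⊔ K) := by
  intro v hv
  by_cases hvK : v ∈ K.verts
  · exact hK v hvK
  · rw [subDeg_sup_of_notMem_verts_right hvK]
    exact hH v (hv.resolve_right hvK)

theorem Maximal23Subgraph.le_of_is23Subgraph_sup (hH : Maximal23Subgraph H)
    (h : Is23Subgraph (H ⊔ K)) : K ≤ H :=
  sup_eq_left.mp (hH.2 _ h le_sup_left)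

end

namespace Maximal23Subgraph

open SimpleGraph.Walk

variable {G : SimpleGraph V} {H : G.Subgraph}

theorem exists_mem_verts_of_isCycle (hH : Maximal23Subgraph H) {u : V} {c : G.Walk u u}
    (hc : c.IsCycle) : ∃ x ∈ c.support, x ∈ H.verts := by
  by_contra! hout
  have h23 : Is23Subgraph (H ⊔ c.toSubgraph) := hH.1.sup fun v hv => by
    rw [mem_verts_toSubgraph] at hv
    rw [subDeg_sup_of_notMem_verts_left (hout v hv)]
    exact Or.inl (hc.ncard_neighborSet_toSubgraph_eq_two hv)
  exact hout u c.start_mem_support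
    ((hH.le_of_is23Subgraph_sup h23).1 c.start_mem_verts_toSubgraph)

theorem exists_getVert_mem_verts (hH : Maximal23Subgraph H) {b b' : V} {p : G.Walk b b'}
    (hp : p.IsPath) (hlen : 1 < p.length) (hb : subDeg H b = 2) (hb' : subDeg H b' = 2) :
    ∃ i, 0 < i ∧ i < p.length ∧ p.getVert i ∈ H.verts := by
  by_contra! hint
  have hnil : ¬ p.Nil := not_nil_iff_lt_length.mpr (by omega)
  have h23 : Is23Subgraph (H ⊔ p.toSubgraph) := hH.1.sup fun v hv => by
    obtain ⟨i, rfl, hi⟩ := mem_support_iff_exists_getVert.mp (p.mem_verts_toSubgraph.mp hv)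
    rcases Nat.eq_zero_or_pos i with rfl | hi0
    · rw [getVert_zero, subDeg_sup_of_neighborSet_eq_singleton
        (hp.neighborSet_toSubgraph_startpoint hnil) (hint 1 one_pos hlen) (by omega), hb]
      exact Or.inr rfl
    rcases hi.lt_or_eq with hi | rfl
    · rw [subDeg_sup_of_notMem_verts_left (hint i hi0 hi)]
      exact Or.inl (hp.ncard_neighborSet_toSubgraph_internal_eq_two hi0.ne' hi)
    · rw [getVert_length, subDeg_sup_of_neighborSet_eq_singleton
        (hp.neighborSet_toSubgraph_endpoint hnil) (hint _ (by omega) (by omega)) (by omega), hb']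
      exact Or.inr rfl
  exact hint 1 one_pos hlen
    ((hH.le_of_is23Subgraph_sup h23).1 (p.mem_verts_toSubgraph.mpr (p.getVert_mem_support 1)))

end Maximal23Subgraph

theorem sub23_gives_fvs_general {G : SimpleGraph V} (H : G.Subgraph)
    (hH : Maximal23Subgraph H) (F : Set V)
    (hBranch : ∀ v : V, subDeg H v = 3 → v ∈ F)
    (hLink : ∀ v : V, subDeg H v = 2 →
      (∃ (u : V) (c : G.Walk u u), c.IsCycle ∧ {x | x ∈ c.support} ∩ H.verts = {v}) →
      v ∈ F)
    (hIso : ∀ (u : V) (c : G.Walk u u), c.IsCycle →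
      (∀ x ∈ c.support, x ∈ H.verts ∧ subDeg H x = 2) → ∃ x ∈ c.support, x ∈ F) :
    (G.induce Fᶜ).IsAcyclic := by
  refine isAcyclic_induce_compl_of_forall_isCycle fun u c hc => ?_
  by_contra! hcF
  have hdeg : ∀ x ∈ c.support, x ∈ H.verts → subDeg H x = 2 := fun x hx hxH =>
    (hH.1 x hxH).resolve_right fun h3 => hcF x hx (hBranch x h3)
  obtain ⟨a, ha, haH⟩ := hH.exists_mem_verts_of_isCycle hc
  obtain ⟨w, hw, hwH⟩ : ∃ w ∈ c.support, w ∉ H.verts := by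
    by_contra! hall
    obtain ⟨x, hx, hxF⟩ := hIso u c hc fun x hx => ⟨hall x hx, hdeg x hx (hall x hx)⟩
    exact hcF x hx hxF
  obtain ⟨b, y, hadj, hbH, hyH⟩ := c.exists_toSubgraph_adj_mem_notMem ha haH hw hwH
  obtain ⟨d, hd, rfl, hdc⟩ := hc.exists_isCycle_snd_eq hadj
  have hbc : b ∈ c.support := (hdc b).mp d.start_mem_support
  rcases hd.inter_eq_singleton_or_exists_isPath hbH hyH with
    hlink | ⟨b', hb'H, p, hp, hlen, hpd, hint⟩
  · exact hcF b hbc (hLink b (hdeg b hbc hbH) ⟨b, d, hd, hlink⟩)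
  · have hb'c : b' ∈ c.support := (hdc b').mp (hpd p.end_mem_support)
    obtain ⟨i, hi0, hil, hiH⟩ :=
      hH.exists_getVert_mem_verts hp hlen (hdeg b hbc hbH) (hdeg b' hb'c hb'H)
    exact hint i hi0 hil hiH

/-- Let `H` be a maximal 2-3-subgraph of a finite graph `G` and let `F` contain every
branchpoint of `H`, every linkpoint of `H`, and at least one vertex of every isolated
cycle of `H`. Then `F` is a feedback vertex set of `G`. -/
theorem sub23_gives_fvs [Fintype V] {G : SimpleGraph V} (H : G.Subgraph)
    (hH : Maximal23Subgraph H) (F : Set V)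
    (hBranch : ∀ v : V, subDeg H v = 3 → v ∈ F)
    (hLink : ∀ v : V, subDeg H v = 2 →
      (∃ (u : V) (c : G.Walk u u), c.IsCycle ∧ {x | x ∈ c.support} ∩ H.verts = {v}) →
      v ∈ F)
    (hIso : ∀ (u : V) (c : G.Walk u u), c.IsCycle →
      (∀ x ∈ c.support, x ∈ H.verts ∧ subDeg H x = 2) → ∃ x ∈ c.support, x ∈ F) :
    (G.induce Fᶜ).IsAcyclic :=
  sub23_gives_fvs_general H hH F hBranch hLink hIso
end

section
/- Let c ≥ 1 and α ≥ 0 be real numbers. Suppose there is a deterministic delayed-decision algorithm for online Feedback Vertex Set whose output satisfies |S_n(G)| ≤ c·μ(G) on every instance (n, G). Then there is a deterministic delayed-decision algorithm with reservations for online Feedback Vertex Set whose cost with reservation cost α is at most min{c, 1 + cα}·μ(G) on every instance (n, G). -/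
open SimpleGraph

/-- `S` is a feedback vertex set of `G`: removing `S` leaves an acyclic induced subgraph. -/
def IsFVS {n : ℕ} (G : SimpleGraph (Fin n)) (S : Finset (Fin n)) : Prop :=
  (G.induce {v : Fin n | v ∉ S}).IsAcyclic

/-- `fvsNum G` is the minimum size of a feedback vertex set of `G`. -/
noncomputable def fvsNum {n : ℕ} (G : SimpleGraph (Fin n)) : ℕ :=
  sInf {k : ℕ | ∃ S : Finset (Fin n), IsFVS G S ∧ S.card = k}

/-- A deterministic delayed-decision algorithm for online Feedback Vertex Set.
Vertices of an instance `(n, G)` arrive in the order `0, 1, …, n-1`; after the `i`-th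
arrival the algorithm has irrevocably selected the set `S n G i ⊆ {0, …, i-1}`. -/
structure DelayedFVSAlgorithm where
  /-- the set selected after seeing the first `i` vertices -/
  S : ∀ n : ℕ, SimpleGraph (Fin n) → ℕ → Finset (Fin n)
  /-- only already presented vertices may be selected -/
  mem_lt : ∀ (n : ℕ) (G : SimpleGraph (Fin n)) (i : ℕ) (v : Fin n),
    v ∈ S n G i → (v : ℕ) < i
  /-- determinism/online condition: on instances agreeing on their `i`-th prefix, the
  selected sets agree -/
  online : ∀ (n m : ℕ) (G : SimpleGraph (Fin n)) (G' : SimpleGraph (Fin m)) (i : ℕ)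
      (hn : i ≤ n) (hm : i ≤ m),
      (∀ x y : Fin i, G.Adj (Fin.castLE hn x) (Fin.castLE hn y) ↔
        G'.Adj (Fin.castLE hm x) (Fin.castLE hm y)) →
      (S n G i).image Fin.val = (S m G' i).image Fin.val
  /-- decisions are irrevocable -/
  irrevocable : ∀ (n : ℕ) (G : SimpleGraph (Fin n)) (i : ℕ), i < n →
    S n G i ⊆ S n G (i + 1)
  /-- a valid partial solution is maintained: the subgraph induced on the presented,
  non-selected vertices is acyclic -/
  valid : ∀ (n : ℕ) (G : SimpleGraph (Fin n)) (i : ℕ), i ≤ n →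
    (G.induce {v : Fin n | (v : ℕ) < i ∧ v ∉ S n G i}).IsAcyclic

/-- A deterministic delayed-decision algorithm with reservations for online
Feedback Vertex Set: besides the irrevocably selected set `S`, the algorithm may
reserve a set `R` of vertices. -/
structure DelayedFVSAlgorithmRes where
  /-- the set of irrevocably selected vertices after seeing the first `i` vertices -/
  S : ∀ n : ℕ, SimpleGraph (Fin n) → ℕ → Finset (Fin n)
  /-- the set of reserved vertices after seeing the first `i` vertices -/
  R : ∀ n : ℕ, SimpleGraph (Fin n) → ℕ → Finset (Fin n)
  memS_lt : ∀ (n : ℕ) (G : SimpleGraph (Fin n)) (i : ℕ) (v : Fin n),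
    v ∈ S n G i → (v : ℕ) < i
  memR_lt : ∀ (n : ℕ) (G : SimpleGraph (Fin n)) (i : ℕ) (v : Fin n),
    v ∈ R n G i → (v : ℕ) < i
  /-- determinism/online condition -/
  online : ∀ (n m : ℕ) (G : SimpleGraph (Fin n)) (G' : SimpleGraph (Fin m)) (i : ℕ)
      (hn : i ≤ n) (hm : i ≤ m),
      (∀ x y : Fin i, G.Adj (Fin.castLE hn x) (Fin.castLE hn y) ↔
        G'.Adj (Fin.castLE hm x) (Fin.castLE hm y)) →
      (S n G i).image Fin.val = (S m G' i).image Fin.val ∧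
      (R n G i).image Fin.val = (R m G' i).image Fin.val
  irrevocableS : ∀ (n : ℕ) (G : SimpleGraph (Fin n)) (i : ℕ), i < n →
    S n G i ⊆ S n G (i + 1)
  irrevocableR : ∀ (n : ℕ) (G : SimpleGraph (Fin n)) (i : ℕ), i < n →
    R n G i ⊆ R n G (i + 1)
  /-- the selected vertices together with the reserved ones form a valid partial
  solution: the subgraph induced on the remaining presented vertices is acyclic -/
  valid : ∀ (n : ℕ) (G : SimpleGraph (Fin n)) (i : ℕ), i ≤ n →
    (G.induce {v : Fin n | (v : ℕ) < i ∧ v ∉ S n G i ∪ R n G i}).IsAcyclic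

/-- The cost of an algorithm with reservations on the instance `(n, G)` with
reservation cost `α`: the irrevocably selected vertices, plus the minimum number of
further vertices needed to complete them to a feedback vertex set, plus `α` per
reserved vertex. -/
noncomputable def resCost (A : DelayedFVSAlgorithmRes) (α : ℝ) (n : ℕ)
    (G : SimpleGraph (Fin n)) : ℝ :=
  ((A.S n G n).card : ℝ) +
    ((sInf {k : ℕ | ∃ T : Finset (Fin n), IsFVS G (A.S n G n ∪ T) ∧ T.card = k} : ℕ) : ℝ) +
    α * ((A.R n G n).card : ℝ)

/-!
Two ways of simulating `A` with reservations suffice. Selecting whatever `A` selects costs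
`|S_n| ≤ c·μ(G)`, since `S_n` is already a feedback vertex set. Reserving whatever `A` selects
and selecting nothing costs `α·|S_n|` for the reservations plus an optimal completion of the empty
set, i.e. at most `μ(G) + α·c·μ(G)`. Choosing the cheaper of the two gives the factor `min c (1 + cα)`.
-/

namespace DelayedFVSAlgorithm

variable (A : DelayedFVSAlgorithm)

def asSelecting : DelayedFVSAlgorithmRes where
  S := A.S
  R _ _ _ := ∅
  memS_lt := A.mem_lt
  memR_lt _ _ _ v hv := absurd hv (Finset.notMem_empty v)
  online n m G G' i hn hm h := ⟨A.online n m G G' i hn hm h, rfl⟩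
  irrevocableS := A.irrevocable
  irrevocableR _ _ _ _ := subset_rfl
  valid n G i hi := by rw [Finset.union_empty]; exact A.valid n G i hi

def asReserving : DelayedFVSAlgorithmRes where
  S _ _ _ := ∅
  R := A.S
  memS_lt _ _ _ v hv := absurd hv (Finset.notMem_empty v)
  memR_lt := A.mem_lt
  online n m G G' i hn hm h := ⟨rfl, A.online n m G G' i hn hm h⟩
  irrevocableS _ _ _ _ := subset_rfl
  irrevocableR := A.irrevocable
  valid n G i hi := by rw [Finset.empty_union]; exact A.valid n G i hi

theorem isFVS_final (n : ℕ) (G : SimpleGraph (Fin n)) : IsFVS G (A.S n G n) := by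
  have hpresented : {v : Fin n | (v : ℕ) < n ∧ v ∉ A.S n G n} = {v | v ∉ A.S n G n} := by
    simp only [Fin.is_lt, true_and]
  unfold IsFVS
  exact hpresented ▸ A.valid n G n le_rfl

theorem resCost_asSelecting (α : ℝ) (n : ℕ) (G : SimpleGraph (Fin n)) :
    resCost A.asSelecting α n G = (A.S n G n).card := by
  have hcompletion : sInf {k : ℕ | ∃ T : Finset (Fin n),
      IsFVS G (A.S n G n ∪ T) ∧ T.card = k} = 0 :=
    Nat.sInf_eq_zero.mpr <| .inl ⟨∅, by simpa using A.isFVS_final n G, Finset.card_empty⟩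
  simp [resCost, asSelecting, hcompletion]

theorem resCost_asReserving (α : ℝ) (n : ℕ) (G : SimpleGraph (Fin n)) :
    resCost A.asReserving α n G = fvsNum G + α * (A.S n G n).card := by
  simp [resCost, asReserving, fvsNum]

end DelayedFVSAlgorithm

theorem fvs_reservation_upper_from_delayed_general (c α : ℝ) (hα : 0 ≤ α)
    (A : DelayedFVSAlgorithm)
    (hA : ∀ (n : ℕ) (G : SimpleGraph (Fin n)),
      ((A.S n G n).card : ℝ) ≤ c * (fvsNum G : ℝ)) :
    ∃ B : DelayedFVSAlgorithmRes, ∀ (n : ℕ) (G : SimpleGraph (Fin n)),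
      resCost B α n G ≤ min c (1 + c * α) * (fvsNum G : ℝ) := by
  rcases le_total c (1 + c * α) with hmin | hmin
  · refine ⟨A.asSelecting, fun n G => ?_⟩
    rw [min_eq_left hmin, A.resCost_asSelecting]
    exact hA n G
  · refine ⟨A.asReserving, fun n G => ?_⟩
    rw [min_eq_right hmin, A.resCost_asReserving]
    calc (fvsNum G : ℝ) + α * (A.S n G n).card
        ≤ fvsNum G + α * (c * fvsNum G) := by gcongr; exact hA n G
      _ = (1 + c * α) * fvsNum G := by ring

/-- A `c`-competitive deterministic delayed-decision algorithm for online Feedback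
Vertex Set yields a `min {c, 1 + cα}`-competitive deterministic delayed-decision
algorithm with reservations. -/
theorem fvs_reservation_upper_from_delayed (c α : ℝ) (hc : 1 ≤ c) (hα : 0 ≤ α)
    (A : DelayedFVSAlgorithm)
    (hA : ∀ (n : ℕ) (G : SimpleGraph (Fin n)),
      ((A.S n G n).card : ℝ) ≤ c * (fvsNum G : ℝ)) :
    ∃ B : DelayedFVSAlgorithmRes, ∀ (n : ℕ) (G : SimpleGraph (Fin n)),
      resCost B α n G ≤ min c (1 + c * α) * (fvsNum G : ℝ) :=
  fvs_reservation_upper_from_delayed_general c α hα A hA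
end

section
/- Let c ≥ 1 and α ≥ 0 be real numbers. Suppose that for every deterministic delayed-decision algorithm for online Feedback Vertex Set and every real ε > 0 there exists an instance (n, G) with μ(G) ≥ 1 and |S_n(G)| > (c − ε)·μ(G). Then for every deterministic delayed-decision algorithm with reservations for online Feedback Vertex Set and every real ε > 0 there exists an instance (n, G) with μ(G) ≥ 1 whose cost with reservation cost α exceeds (min{1 + (c − 1)α, c} − ε)·μ(G). -/
open SimpleGraph

/-!
Selecting every vertex that a reservation algorithm selects or reserves is a plain
delayed-decision algorithm, so on some instance `|S| + |R| > (c - ε) μ`. The cost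
`|S| + t + α|R|` of the reservation algorithm, where `t` is the completion number of `S`,
dominates both `|S| + |R|` when `α ≥ 1` and, since `|S| + t ≥ μ`, the convex combination
`(1 - α) μ + α (|S| + |R|)` when `α ≤ 1`.
-/

theorem isFVS_union_univ {n : ℕ} (G : SimpleGraph (Fin n)) (S : Finset (Fin n)) :
    IsFVS G (S ∪ Finset.univ) := by
  have : IsEmpty {v : Fin n | v ∉ S ∪ Finset.univ} := by simp
  exact IsAcyclic.of_subsingleton

theorem fvsNum_le_card_add_sInf_completion {n : ℕ} (G : SimpleGraph (Fin n))
    (S : Finset (Fin n)) :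
    fvsNum G ≤ S.card + sInf {k : ℕ | ∃ T : Finset (Fin n), IsFVS G (S ∪ T) ∧ T.card = k} := by
  obtain ⟨T, hT, hTcard⟩ := Nat.sInf_mem
    (s := {k : ℕ | ∃ T : Finset (Fin n), IsFVS G (S ∪ T) ∧ T.card = k})
    ⟨_, Finset.univ, isFVS_union_univ G S, rfl⟩
  calc fvsNum G ≤ (S ∪ T).card := Nat.sInf_le ⟨S ∪ T, hT, rfl⟩
    _ ≤ S.card + T.card := Finset.card_union_le S T
    _ = _ := by rw [hTcard]

def DelayedFVSAlgorithmRes.selectReserved (B : DelayedFVSAlgorithmRes) : DelayedFVSAlgorithm where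
  S n G i := B.S n G i ∪ B.R n G i
  mem_lt n G i v hv := (Finset.mem_union.1 hv).elim (B.memS_lt n G i v) (B.memR_lt n G i v)
  online n m G G' i hn hm hadj := by
    obtain ⟨hS, hR⟩ := B.online n m G G' i hn hm hadj
    simp only [Finset.image_union, hS, hR]
  irrevocable n G i hi :=
    Finset.union_subset_union (B.irrevocableS n G i hi) (B.irrevocableR n G i hi)
  valid n G i hi := B.valid n G i hi

theorem lt_add_mul_of_le_add_of_lt_add {s t r m c α ε : ℝ} (hα : 0 ≤ α) (ht : 0 ≤ t)
    (hr : 0 ≤ r) (hm : 0 < m) (hε : 0 < ε) (hst : m ≤ s + t) (hsr : (c - ε) * m < s + r) :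
    (min (1 + (c - 1) * α) c - ε) * m < s + t + α * r := by
  rcases le_total α 1 with hα1 | hα1
  · have hmin : (min (1 + (c - 1) * α) c - ε) * m ≤ (1 + (c - 1) * α - ε) * m :=
      mul_le_mul_of_nonneg_right (by linarith [min_le_left (1 + (c - 1) * α) c]) hm.le
    have hconvex : (1 - α) * m + α * (s + r) ≤ s + t + α * r := by
      nlinarith [mul_le_mul_of_nonneg_left hst (sub_nonneg.2 hα1), mul_nonneg hα ht]
    rcases hα.eq_or_lt with rfl | hα0
    · nlinarith
    · nlinarith [mul_lt_mul_of_pos_left hsr hα0,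
        mul_nonneg (sub_nonneg.2 hα1) (mul_pos hε hm).le]
  · have hmin : (min (1 + (c - 1) * α) c - ε) * m ≤ (c - ε) * m :=
      mul_le_mul_of_nonneg_right (by linarith [min_le_right (1 + (c - 1) * α) c]) hm.le
    nlinarith [le_mul_of_one_le_left hr hα1]

theorem fvs_reservation_lower_from_delayed_general (c α : ℝ) (hα : 0 ≤ α)
    (h : ∀ (A : DelayedFVSAlgorithm) (ε : ℝ), 0 < ε →
      ∃ (n : ℕ) (G : SimpleGraph (Fin n)),
        1 ≤ fvsNum G ∧ ((A.S n G n).card : ℝ) > (c - ε) * (fvsNum G : ℝ)) :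
    ∀ (B : DelayedFVSAlgorithmRes) (ε : ℝ), 0 < ε →
      ∃ (n : ℕ) (G : SimpleGraph (Fin n)),
        1 ≤ fvsNum G ∧
          resCost B α n G > (min (1 + (c - 1) * α) c - ε) * (fvsNum G : ℝ) := by
  intro B ε hε
  obtain ⟨n, G, hμ, hsel⟩ := h B.selectReserved ε hε
  refine ⟨n, G, hμ, ?_⟩
  have hsr : (c - ε) * fvsNum G < (B.S n G n).card + (B.R n G n).card :=
    hsel.trans_le (by exact_mod_cast Finset.card_union_le _ _)
  exact lt_add_mul_of_le_add_of_lt_add hα (Nat.cast_nonneg _) (Nat.cast_nonneg _)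
    (by exact_mod_cast hμ) hε (by exact_mod_cast fvsNum_le_card_add_sInf_completion G _) hsr

/-- A lower bound of `c` on the competitive ratio of delayed-decision algorithms for
online Feedback Vertex Set yields a lower bound of `min {1 + (c-1)α, c}` for
delayed-decision algorithms with reservations. -/
theorem fvs_reservation_lower_from_delayed (c α : ℝ) (hc : 1 ≤ c) (hα : 0 ≤ α)
    (h : ∀ (A : DelayedFVSAlgorithm) (ε : ℝ), 0 < ε →
      ∃ (n : ℕ) (G : SimpleGraph (Fin n)),
        1 ≤ fvsNum G ∧ ((A.S n G n).card : ℝ) > (c - ε) * (fvsNum G : ℝ)) :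
    ∀ (B : DelayedFVSAlgorithmRes) (ε : ℝ), 0 < ε →
      ∃ (n : ℕ) (G : SimpleGraph (Fin n)),
        1 ≤ fvsNum G ∧
          resCost B α n G > (min (1 + (c - 1) * α) c - ε) * (fvsNum G : ℝ) :=
  fvs_reservation_lower_from_delayed_general c α hα h
end

section
/- For every real c, every deterministic classical online algorithm for Vertex Cover admits an instance (n, G) on which its output satisfies |S_n(G)| > c·τ(G). In other words, the classical online Vertex Cover problem admits no competitive algorithm. -/
open SimpleGraph

/-- `S` is a vertex cover of `G`: it contains at least one endpoint of every edge. -/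
def IsVC {n : ℕ} (G : SimpleGraph (Fin n)) (S : Finset (Fin n)) : Prop :=
  ∀ ⦃x y : Fin n⦄, G.Adj x y → x ∈ S ∨ y ∈ S

/-- `vcNum G` is the minimum size of a vertex cover of `G`. -/
noncomputable def vcNum {n : ℕ} (G : SimpleGraph (Fin n)) : ℕ :=
  sInf {k : ℕ | ∃ S : Finset (Fin n), IsVC G S ∧ S.card = k}

/-- A deterministic classical online algorithm for Vertex Cover: upon arrival of
vertex `i` the algorithm decides immediately and irrevocably whether to include it,
and the selected set always covers all presented edges. -/
structure ClassicalVCAlgorithm where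
  /-- the set selected after seeing the first `i` vertices -/
  S : ∀ n : ℕ, SimpleGraph (Fin n) → ℕ → Finset (Fin n)
  mem_lt : ∀ (n : ℕ) (G : SimpleGraph (Fin n)) (i : ℕ) (v : Fin n),
    v ∈ S n G i → (v : ℕ) < i
  /-- determinism/online condition -/
  online : ∀ (n m : ℕ) (G : SimpleGraph (Fin n)) (G' : SimpleGraph (Fin m)) (i : ℕ)
      (hn : i ≤ n) (hm : i ≤ m),
      (∀ x y : Fin i, G.Adj (Fin.castLE hn x) (Fin.castLE hn y) ↔
        G'.Adj (Fin.castLE hm x) (Fin.castLE hm y)) →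
      (S n G i).image Fin.val = (S m G' i).image Fin.val
  /-- immediacy: only the newly arrived vertex may be added, and nothing is removed -/
  immediate : ∀ (n : ℕ) (G : SimpleGraph (Fin n)) (i : ℕ), i < n →
    S n G i ⊆ S n G (i + 1) ∧
      ∀ v : Fin n, v ∈ S n G (i + 1) → v ∉ S n G i → (v : ℕ) = i
  /-- validity: the selected set is a vertex cover of the presented prefix -/
  valid : ∀ (n : ℕ) (G : SimpleGraph (Fin n)) (i : ℕ), i ≤ n →
    ∀ x y : Fin n, (x : ℕ) < i → (y : ℕ) < i → G.Adj x y →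
      x ∈ S n G i ∨ y ∈ S n G i

/-!
Present the vertex `0` first, with no edges. If the algorithm takes it, stop: a single isolated
vertex has `τ = 0`. If it refuses, it can never take `0` later, so continuing with a star centred
at `0` forces it to take every leaf, while `{0}` alone covers the star.
-/

lemma vcNum_le_card {n : ℕ} {G : SimpleGraph (Fin n)} {S : Finset (Fin n)} (hS : IsVC G S) :
    vcNum G ≤ S.card :=
  Nat.sInf_le ⟨S, hS, rfl⟩

lemma vcNum_bot (n : ℕ) : vcNum (⊥ : SimpleGraph (Fin n)) = 0 :=
  Nat.eq_zero_of_le_zero <| vcNum_le_card (S := ∅) fun _ _ h => False.elim h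

lemma vcNum_starGraph_le_one {n : ℕ} (r : Fin n) : vcNum (starGraph r) ≤ 1 :=
  vcNum_le_card (S := {r}) fun x y h => by
    rcases (starGraph_adj.mp h).2 with rfl | rfl <;> simp

namespace ClassicalVCAlgorithm

variable (A : ClassicalVCAlgorithm)

lemma notMem_S_of_notMem_S_succ {n : ℕ} {G : SimpleGraph (Fin n)} {v : Fin n}
    (hv : v ∉ A.S n G (v + 1)) {j : ℕ} (hj : j ≤ n) : v ∉ A.S n G j := by
  induction j with
  | zero => exact fun h => absurd (A.mem_lt n G 0 v h) (Nat.not_lt_zero _)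
  | succ j ih =>
    intro hmem
    by_cases hjv : j = v
    · exact hv (hjv ▸ hmem)
    · have := (A.immediate n G j (by omega)).2 v hmem (ih (by omega))
      omega

lemma mem_S_of_adj_of_notMem_S_succ {n : ℕ} {G : SimpleGraph (Fin n)} {v w : Fin n}
    (hv : v ∉ A.S n G (v + 1)) (hadj : G.Adj v w) : w ∈ A.S n G n :=
  (A.valid n G n le_rfl v w v.isLt w.isLt hadj).resolve_left
    (A.notMem_S_of_notMem_S_succ hv le_rfl)

/-- The one-vertex prefix carries no edge, so the first decision does not depend on the graph. -/
lemma zero_mem_S_one_iff {n m : ℕ} (G : SimpleGraph (Fin (n + 1)))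
    (G' : SimpleGraph (Fin (m + 1))) : 0 ∈ A.S (n + 1) G 1 ↔ 0 ∈ A.S (m + 1) G' 1 := by
  have himage := A.online (n + 1) (m + 1) G G' 1 (by omega) (by omega) fun x y => by
    rw [Subsingleton.elim x y]
    simp
  have key : ∀ {p : ℕ} (H : SimpleGraph (Fin (p + 1))),
      0 ∈ A.S (p + 1) H 1 ↔ 0 ∈ (A.S (p + 1) H 1).image Fin.val := fun H => by
    rw [Finset.mem_image]
    exact ⟨fun h => ⟨0, h, rfl⟩,
      fun ⟨v, hv, hv0⟩ => by rwa [← Fin.val_eq_zero_iff.mp hv0]⟩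
  rw [key, himage, ← key]

lemma card_le_card_S_starGraph {k : ℕ} (h0 : 0 ∉ A.S (k + 1) (starGraph (0 : Fin (k + 1))) 1) :
    k ≤ (A.S (k + 1) (starGraph (0 : Fin (k + 1))) (k + 1)).card := by
  have hleaves : Finset.univ.erase 0 ⊆ A.S (k + 1) (starGraph (0 : Fin (k + 1))) (k + 1) :=
    fun w hw => A.mem_S_of_adj_of_notMem_S_succ h0 <|
      starGraph_center_adj (Finset.ne_of_mem_erase hw).symm
  simpa using Finset.card_le_card hleaves

end ClassicalVCAlgorithm

/-- The classical online Vertex Cover problem admits no competitive algorithm. -/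
theorem classical_online_vc_not_competitive (c : ℝ) (A : ClassicalVCAlgorithm) :
    ∃ (n : ℕ) (G : SimpleGraph (Fin n)),
      ((A.S n G n).card : ℝ) > c * (vcNum G : ℝ) := by
  by_cases h0 : 0 ∈ A.S 1 (⊥ : SimpleGraph (Fin 1)) 1
  · refine ⟨1, ⊥, ?_⟩
    have : 0 < (A.S 1 ⊥ 1).card := Finset.card_pos.mpr ⟨0, h0⟩
    simpa [vcNum_bot] using this
  · set k := ⌈c⌉₊ + 1
    set G := starGraph (0 : Fin (k + 1))
    refine ⟨k + 1, G, ?_⟩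
    rw [A.zero_mem_S_one_iff (n := 0) (m := k) ⊥ G] at h0
    have hS : (k : ℝ) ≤ (A.S (k + 1) G (k + 1)).card := by
      exact_mod_cast A.card_le_card_S_starGraph h0
    have hτ : (vcNum G : ℝ) ≤ 1 := by exact_mod_cast vcNum_starGraph_le_one _
    have hk : max c 0 < k := max_lt (by push_cast [k]; linarith [Nat.le_ceil c]) (by positivity)
    calc c * (vcNum G : ℝ) ≤ max c 0 * 1 :=
          mul_le_mul (le_max_left c 0) hτ (Nat.cast_nonneg _) (le_max_right c 0)
      _ = max c 0 := mul_one _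
      _ < k := hk
      _ ≤ _ := hS
end

section
/- For every real c, every deterministic classical online algorithm for Feedback Vertex Set admits an instance (n, G) on which its output satisfies |S_n(G)| > c·μ(G). In other words, the classical online Feedback Vertex Set problem admits no competitive algorithm. -/
open SimpleGraph

/-- A deterministic classical online algorithm for Feedback Vertex Set: upon arrival of
vertex `i` the algorithm decides immediately and irrevocably whether to include it, and
the presented subgraph induced on non-selected vertices is always acyclic. -/
structure ClassicalFVSAlgorithm where
  /-- the set selected after seeing the first `i` vertices -/
  S : ∀ n : ℕ, SimpleGraph (Fin n) → ℕ → Finset (Fin n)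
  mem_lt : ∀ (n : ℕ) (G : SimpleGraph (Fin n)) (i : ℕ) (v : Fin n),
    v ∈ S n G i → (v : ℕ) < i
  /-- determinism/online condition -/
  online : ∀ (n m : ℕ) (G : SimpleGraph (Fin n)) (G' : SimpleGraph (Fin m)) (i : ℕ)
      (hn : i ≤ n) (hm : i ≤ m),
      (∀ x y : Fin i, G.Adj (Fin.castLE hn x) (Fin.castLE hn y) ↔
        G'.Adj (Fin.castLE hm x) (Fin.castLE hm y)) →
      (S n G i).image Fin.val = (S m G' i).image Fin.val
  /-- immediacy: only the newly arrived vertex may be added, and nothing is removed -/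
  immediate : ∀ (n : ℕ) (G : SimpleGraph (Fin n)) (i : ℕ), i < n →
    S n G i ⊆ S n G (i + 1) ∧
      ∀ v : Fin n, v ∈ S n G (i + 1) → v ∉ S n G i → (v : ℕ) = i
  /-- validity -/
  valid : ∀ (n : ℕ) (G : SimpleGraph (Fin n)) (i : ℕ), i ≤ n →
    (G.induce {v : Fin n | (v : ℕ) < i ∧ v ∉ S n G i}).IsAcyclic

/-!
If the algorithm takes the single vertex of the edgeless one-vertex graph, it pays `1` where
`μ = 0`. Otherwise determinism forces it to reject vertex `0` of every instance, and immediacy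
makes that rejection final. Feed it the flower: `k` triangles sharing the centre `0`. To keep
the presented graph acyclic it must take a vertex of every petal, so it pays at least `k`,
whereas `{0}` alone is a feedback vertex set.
-/

namespace SimpleGraph

theorem isAcyclic_of_forall_subsingleton_neighborSet {V : Type*} {G : SimpleGraph V}
    (h : ∀ v, (G.neighborSet v).Subsingleton) : G.IsAcyclic := fun v _ hc =>
  hc.snd_ne_penultimate <| h v (Walk.adj_snd hc.not_nil) (Walk.adj_penultimate hc.not_nil).symm

theorem IsAcyclic.not_adj_of_adj_of_induce {V : Type*} {G : SimpleGraph V} {s : Set V}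
    (hs : (G.induce s).IsAcyclic) {a b c : V} (ha : a ∈ s) (hb : b ∈ s) (hc : c ∈ s)
    (hab : G.Adj a b) (hac : G.Adj a c) : ¬ G.Adj b c := fun hbc => by
  classical
  let x : s := ⟨a, ha⟩
  let y : s := ⟨b, hb⟩
  let z : s := ⟨c, hc⟩
  exact hs.cliqueFree le_rfl {x, y, z} (is3Clique_triple_iff.2 ⟨hab, hac, hbc⟩)

end SimpleGraph

theorem fvsNum_le_card {n : ℕ} {G : SimpleGraph (Fin n)} {S : Finset (Fin n)} (h : IsFVS G S) :
    fvsNum G ≤ S.card :=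
  Nat.sInf_le ⟨S, h, rfl⟩

theorem fvsNum_eq_zero_of_isAcyclic {n : ℕ} {G : SimpleGraph (Fin n)} (h : G.IsAcyclic) :
    fvsNum G = 0 :=
  Nat.le_zero.1 (fvsNum_le_card (S := ∅) (h.induce _))

namespace ClassicalFVSAlgorithm

variable (A : ClassicalFVSAlgorithm) {n : ℕ} {G : SimpleGraph (Fin n)}

theorem isFVS_S : IsFVS G (A.S n G n) := by
  have hs : {v : Fin n | (v : ℕ) < n ∧ v ∉ A.S n G n} = {v | v ∉ A.S n G n} := by
    simp only [Fin.is_lt, true_and]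
  rw [IsFVS, ← hs]
  exact A.valid n G n le_rfl

theorem mem_S_of_val_lt {v : Fin n} {i j : ℕ} (hv : (v : ℕ) < i) (hij : i ≤ j) (hjn : j ≤ n)
    (h : v ∈ A.S n G j) : v ∈ A.S n G i := by
  induction j, hij using Nat.le_induction with
  | base => exact h
  | succ j hij ih =>
    refine ih (by omega) (by_contra fun hv' => ?_)
    have := (A.immediate n G j (by omega)).2 v h hv'
    omega

theorem image_val_S_one (hn : 1 ≤ n) :
    (A.S n G 1).image Fin.val = (A.S 1 ⊥ 1).image Fin.val :=
  A.online n 1 G ⊥ 1 hn le_rfl fun x y => by rw [Subsingleton.elim x y]; simp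

theorem zero_notMem_S (h : A.S 1 ⊥ 1 = ∅) {G : SimpleGraph (Fin (n + 1))} :
    (0 : Fin (n + 1)) ∉ A.S (n + 1) G (n + 1) := fun h0 => by
  have h0' := A.mem_S_of_val_lt (i := 1) (by simp) (by omega) le_rfl h0
  have := A.image_val_S_one (G := G) (by omega)
  rw [h, Finset.image_empty, Finset.image_eq_empty] at this
  simp [this] at h0'

end ClassicalFVSAlgorithm

/-- Vertex `0` is the centre; the `j`-th petal (`1 ≤ j ≤ k`) is `{2j-1, 2j}`, i.e. the vertices
`v ≠ 0` with `(v + 1) / 2 = j`. -/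
def flower (k : ℕ) : SimpleGraph (Fin (2 * k + 1)) where
  Adj u v := u ≠ v ∧ (u = 0 ∨ v = 0 ∨ ((u : ℕ) + 1) / 2 = ((v : ℕ) + 1) / 2)
  symm := ⟨fun _ _ h => ⟨h.1.symm, by grind⟩⟩
  loopless := ⟨fun _ h => h.1 rfl⟩

theorem flower_induce_isAcyclic {k : ℕ} {s : Set (Fin (2 * k + 1))} (hs : 0 ∉ s) :
    ((flower k).induce s).IsAcyclic := by
  refine isAcyclic_of_forall_subsingleton_neighborSet ?_
  rintro ⟨v, hv⟩ ⟨a, ha⟩ hva ⟨b, hb⟩ hvb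
  have h0 : ∀ x ∈ s, (x : ℕ) ≠ 0 := fun x hx h => hs (Fin.val_eq_zero_iff.1 h ▸ hx)
  have := h0 v hv; have := h0 a ha; have := h0 b hb
  simp only [mem_neighborSet, comap_adj, Function.Embedding.coe_subtype, flower, ne_eq,
    Fin.ext_iff, Fin.val_zero] at hva hvb
  refine Subtype.ext (Fin.ext ?_)
  dsimp only
  omega

theorem fvsNum_flower_le_one (k : ℕ) : fvsNum (flower k) ≤ 1 :=
  fvsNum_le_card (S := {0}) (flower_induce_isAcyclic (by simp))

theorem le_card_of_isFVS_flower {k : ℕ} {S : Finset (Fin (2 * k + 1))} (hS : IsFVS (flower k) S)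
    (h0 : 0 ∉ S) : k ≤ S.card := by
  have hpetal : ∀ j ∈ Finset.Icc 1 k, ∃ v ∈ S, ((v : ℕ) + 1) / 2 = j := by
    intro j hj
    rw [Finset.mem_Icc] at hj
    by_contra! hmiss
    let a : Fin (2 * k + 1) := ⟨2 * j - 1, by omega⟩
    let b : Fin (2 * k + 1) := ⟨2 * j, by omega⟩
    have ha : a ∉ S := fun h => hmiss a h (by simp only [a]; omega)
    have hb : b ∉ S := fun h => hmiss b h (by simp only [b]; omega)
    refine hS.not_adj_of_adj_of_induce h0 ha hb ?_ ?_ ?_ <;>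
      simp only [flower, a, b, ne_eq, Fin.ext_iff, Fin.val_zero, true_or, and_true] <;> omega
  calc k = (Finset.Icc 1 k).card := by simp
    _ ≤ (S.image fun v : Fin (2 * k + 1) => ((v : ℕ) + 1) / 2).card :=
      Finset.card_le_card fun j hj => by simpa using hpetal j hj
    _ ≤ S.card := Finset.card_image_le

/-- The classical online Feedback Vertex Set problem admits no competitive
algorithm. -/
theorem classical_online_fvs_not_competitive (c : ℝ) (A : ClassicalFVSAlgorithm) :
    ∃ (n : ℕ) (G : SimpleGraph (Fin n)),
      ((A.S n G n).card : ℝ) > c * (fvsNum G : ℝ) := by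
  by_cases h : A.S 1 ⊥ 1 = ∅
  · set k := ⌈|c|⌉₊ + 1
    refine ⟨2 * k + 1, flower k, ?_⟩
    have hk : k ≤ (A.S _ (flower k) _).card :=
      le_card_of_isFVS_flower A.isFVS_S (A.zero_notMem_S h)
    have hμ : (fvsNum (flower k) : ℝ) ≤ 1 := by exact_mod_cast fvsNum_flower_le_one k
    calc c * fvsNum (flower k) ≤ |c| * fvsNum (flower k) := by gcongr; exact le_abs_self c
      _ ≤ |c| := mul_le_of_le_one_right (abs_nonneg c) hμ
      _ < k := by unfold k; push_cast; linarith [Nat.le_ceil |c|]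
      _ ≤ (A.S _ (flower k) _).card := by exact_mod_cast hk
  · refine ⟨1, ⊥, ?_⟩
    rw [fvsNum_eq_zero_of_isAcyclic isAcyclic_bot]
    simpa [Finset.card_pos, Finset.nonempty_iff_ne_empty] using h
end

section
/- Let G be a finite simple graph and H a maximal 2-3-subgraph of G. Then every cycle of G contains at least one vertex of V(H). -/
open SimpleGraph

variable {V : Type*}

/-! If a cycle avoided `H`, adding it to `H` would raise the degree of no vertex of `H` and give
each vertex of the cycle degree 2, so `H ⊔ c` would be a strictly larger 2-3-subgraph. -/

section

variable {G : SimpleGraph V}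

lemma SimpleGraph.Subgraph.neighborSet_eq_empty_of_notMem_verts {H : G.Subgraph} {v : V}
    (hv : v ∉ H.verts) : H.neighborSet v = ∅ :=
  Set.eq_empty_of_forall_notMem fun _ hw => hv hw.fst_mem

lemma Is23Subgraph.sup_of_disjoint_verts {H K : G.Subgraph} (hH : Is23Subgraph H)
    (hK : Is23Subgraph K) (hdisj : Disjoint H.verts K.verts) : Is23Subgraph (H ⊔ K) := by
  rintro v (hvH | hvK)
  · have hvK : v ∉ K.verts := hdisj.notMem_of_mem_left hvH
    simpa only [subDeg, Subgraph.neighborSet_sup,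
      Subgraph.neighborSet_eq_empty_of_notMem_verts hvK, Set.union_empty] using hH v hvH
  · have hvH : v ∉ H.verts := hdisj.notMem_of_mem_right hvK
    simpa only [subDeg, Subgraph.neighborSet_sup,
      Subgraph.neighborSet_eq_empty_of_notMem_verts hvH, Set.empty_union] using hK v hvK

lemma SimpleGraph.Walk.IsCycle.is23Subgraph_toSubgraph {u : V} {c : G.Walk u u}
    (hc : c.IsCycle) : Is23Subgraph c.toSubgraph := fun _ hv =>
  Or.inl (hc.ncard_neighborSet_toSubgraph_eq_two (c.mem_verts_toSubgraph.mp hv))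

end

theorem cycle_meets_maximal_sub23_general {G : SimpleGraph V} (H : G.Subgraph)
    (hH : Maximal23Subgraph H) (u : V) (c : G.Walk u u) (hc : c.IsCycle) :
    ∃ x ∈ c.support, x ∈ H.verts := by
  by_contra! hcon
  have hdisj : Disjoint H.verts c.toSubgraph.verts :=
    Set.disjoint_right.mpr fun v hv => hcon v (c.mem_verts_toSubgraph.mp hv)
  have hsup : H ⊔ c.toSubgraph = H :=
    hH.2 _ (hH.1.sup_of_disjoint_verts hc.is23Subgraph_toSubgraph hdisj) le_sup_left
  have hu : u ∈ (H ⊔ c.toSubgraph).verts := Or.inr c.start_mem_verts_toSubgraph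
  exact hcon u c.start_mem_support (hsup ▸ hu)

/-- Every cycle of a finite graph `G` contains at least one vertex of any maximal
2-3-subgraph `H` of `G`. -/
theorem cycle_meets_maximal_sub23 [Fintype V] {G : SimpleGraph V} (H : G.Subgraph)
    (hH : Maximal23Subgraph H) (u : V) (c : G.Walk u u) (hc : c.IsCycle) :
    ∃ x ∈ c.support, x ∈ H.verts :=
  cycle_meets_maximal_sub23_general H hH u c hc
end
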